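/- The class (K₀, ≤) has the amalgamation property: for A, B, C ∈ K₀ with C ≤ A, C ≤ B, and A ∩ B = C, the canonical amalgam D = A ⊕_C B lies in K₀ and satisfies A ≤ D and B ≤ D. -/
import Mathlib


open scoped Classical

/-- A simple matroid of rank ≤ 3 presented as a 3-hypergraph `(V, R)`:
`R` is irreflexive, symmetric, and satisfies the exchange axiom
(if `R a b c` and `R a b d` then `{a,b,c,d}` is an `R`-clique). -/
structure PlaneGeom (V : Type) where
  R : V → V → V → Prop
  irrefl : ∀ a b c, R a b c → a ≠ b ∧ b ≠ c ∧ a ≠ c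
  symm₁ : ∀ a b c, R a b c → R b a c
  symm₂ : ∀ a b c, R a b c → R a c b
  exchange : ∀ a b c d, R a b c → R a b d → c ≠ d → R a c d

/-- A line `ℓ` is based in `B` if it contains at least two points of `B`. -/
def BasedIn {V : Type} [DecidableEq V] (ℓ B : Finset V) : Prop := 2 ≤ (ℓ ∩ B).card

namespace PlaneGeom

variable {V : Type} [Fintype V] [DecidableEq V] (G : PlaneGeom V)

/-- A set of pairwise collinear points. -/
def IsClique (s : Finset V) : Prop :=
  ∀ a ∈ s, ∀ b ∈ s, ∀ c ∈ s, a ≠ b → b ≠ c → a ≠ c → G.R a b c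

/-- A (nontrivial) line of the submatroid induced on `X`: a maximal
`R`-clique in `X` of size at least 3. -/
def IsLine (X ℓ : Finset V) : Prop :=
  ℓ ⊆ X ∧ 3 ≤ ℓ.card ∧ G.IsClique ℓ ∧
    ∀ p ∈ X, p ∉ ℓ → ¬ G.IsClique (insert p ℓ)

/-- The set of nontrivial lines of the submatroid induced on `X`. -/
noncomputable def lines (X : Finset V) : Finset (Finset V) :=
  Finset.univ.filter (fun ℓ => G.IsLine X ℓ)

/-- The predimension function `δ(X) = |X| - Σ_{ℓ ∈ L(X)} (|ℓ| - 2)`. -/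
noncomputable def delta (X : Finset V) : ℤ :=
  (X.card : ℤ) - ∑ ℓ ∈ G.lines X, ((ℓ.card : ℤ) - 2)

/-- `A ≤ B` : `A` is a strong substructure of `B`. -/
def Strong (A B : Finset V) : Prop :=
  A ⊆ B ∧ ∀ X : Finset V, A ⊆ X → X ⊆ B → G.delta A ≤ G.delta X

/-- Membership in the class `K₀`: hereditarily nonnegative `δ`. -/
def InK0 (A : Finset V) : Prop := ∀ A' ⊆ A, 0 ≤ G.delta A'

/-- `B` is a primitive strong extension of `A`. -/
def Primitive (A B : Finset V) : Prop :=
  G.Strong A B ∧ A ≠ B ∧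
    ∀ B₀ : Finset V, A ⊆ B₀ → B₀ ⊆ B → G.Strong A B₀ → G.Strong B₀ B →
      B₀ = A ∨ B₀ = B

end PlaneGeom

namespace PlaneGeom

/-- The submatroid induced on `A ∪ B` by the ambient geometry is the canonical
amalgam `A ⊕_{A ∩ B} B`: every nontrivial line of `A ∪ B` is a line of `A`, a
line of `B`, or the union of a line of `A` and a line of `B` sharing at least
two points of `C = A ∩ B`. -/
def IsCanonicalAmalgam {V : Type} [Fintype V] [DecidableEq V]
    (G : PlaneGeom V) (A B : Finset V) : Prop :=
  ∀ ℓ ∈ G.lines (A ∪ B),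
    ℓ ⊆ A ∨ ℓ ⊆ B ∨
      (2 ≤ (ℓ ∩ (A ∩ B)).card ∧ G.IsLine A (ℓ ∩ A) ∧ G.IsLine B (ℓ ∩ B))

end PlaneGeom



namespace PlaneGeom

set_option linter.unusedSectionVars false

variable {V : Type} [Fintype V] [DecidableEq V] {G : PlaneGeom V}

lemma IsClique.subset {s t : Finset V} (h : G.IsClique t) (hst : s ⊆ t) : G.IsClique s :=
  fun a ha b hb c hc => h a (hst ha) b (hst hb) c (hst hc)

lemma clique_insert {ℓ : Finset V} (hℓ : G.IsClique ℓ) {a b p : V}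
    (ha : a ∈ ℓ) (hb : b ∈ ℓ) (hab : a ≠ b) (hR : G.R a b p) :
    G.IsClique (insert p ℓ) := by
  by_cases hpℓ : p ∈ ℓ
  · rwa [Finset.insert_eq_self.2 hpℓ]
  obtain ⟨-, hbp, hap⟩ := G.irrefl a b p hR
  have step1 : ∀ x ∈ ℓ, x ≠ a → G.R a x p := by
    intro x hx hxa
    by_cases hxb : x = b
    · exact hxb ▸ hR
    · have hxp : x ≠ p := fun h => hpℓ (h ▸ hx)
      exact G.exchange a b x p
        (hℓ a ha b hb x hx hab (fun h => hxb h.symm) (fun h => hxa h.symm)) hR hxp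
  have claim : ∀ x ∈ ℓ, ∀ y ∈ ℓ, x ≠ y → G.R x y p := by
    intro x hx y hy hxy
    have hyp : y ≠ p := fun h => hpℓ (h ▸ hy)
    by_cases hxa : x = a
    · exact hxa ▸ step1 y hy (hxa ▸ hxy).symm
    by_cases hya : y = a
    · exact hya ▸ G.symm₁ a x p (step1 x hx hxa)
    have h1 : G.R a x p := step1 x hx hxa
    have h2 : G.R a x y := hℓ a ha x hx y hy (fun h => hxa h.symm) hxy (fun h => hya h.symm)
    exact G.symm₂ x p y (G.exchange x a p y (G.symm₁ a x p h1) (G.symm₁ a x y h2)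
      (fun h => hyp h.symm))
  intro u hu v hv w hw huv hvw huw
  rcases Finset.mem_insert.1 hu with hu' | hu'
  · subst hu'
    have hv' : v ∈ ℓ := (Finset.mem_insert.1 hv).resolve_left (fun h => huv h.symm)
    have hw' : w ∈ ℓ := (Finset.mem_insert.1 hw).resolve_left (fun h => huw h.symm)
    exact G.symm₁ v u w (G.symm₂ v w u (claim v hv' w hw' hvw))
  rcases Finset.mem_insert.1 hv with hv' | hv'
  · subst hv'
    have hw' : w ∈ ℓ := (Finset.mem_insert.1 hw).resolve_left (fun h => hvw h.symm)
    exact G.symm₂ u w v (claim u hu' w hw' huw)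
  rcases Finset.mem_insert.1 hw with hw' | hw'
  · subst hw'
    exact claim u hu' v hv' huv
  · exact hℓ u hu' v hv' w hw' huv hvw huw

lemma exists_line_ext {X m : Finset V} (hmX : m ⊆ X) (hcl : G.IsClique m) (h3 : 3 ≤ m.card) :
    ∃ ℓ, G.IsLine X ℓ ∧ m ⊆ ℓ := by
  obtain ⟨ℓ, hℓ, hmax⟩ := Finset.exists_max_image
    ((X.powerset).filter fun ℓ => m ⊆ ℓ ∧ G.IsClique ℓ) Finset.card
    ⟨m, by simp [hmX, hcl, Finset.mem_filter]⟩
  simp only [Finset.mem_filter, Finset.mem_powerset] at hℓ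
  refine ⟨ℓ, ⟨hℓ.1, le_trans h3 (Finset.card_le_card hℓ.2.1), hℓ.2.2, ?_⟩, hℓ.2.1⟩
  intro p hp hpℓ hcl'
  have hmem : insert p ℓ ∈ (X.powerset).filter fun ℓ => m ⊆ ℓ ∧ G.IsClique ℓ := by
    simp only [Finset.mem_filter, Finset.mem_powerset]
    exact ⟨Finset.insert_subset hp hℓ.1, hℓ.2.1.trans (Finset.subset_insert _ _), hcl'⟩
  have := hmax _ hmem
  rw [Finset.card_insert_of_notMem hpℓ] at this
  omega

lemma line_restrict {X Y ℓ : Finset V} (hYX : Y ⊆ X) (hl : G.IsLine X ℓ)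
    (h3 : 3 ≤ (ℓ ∩ Y).card) : G.IsLine Y (ℓ ∩ Y) := by
  obtain ⟨hlX, -, hcl, hmax⟩ := hl
  refine ⟨Finset.inter_subset_right, h3, hcl.subset Finset.inter_subset_left, ?_⟩
  intro p hp hpl hcl'
  obtain ⟨a, ha, b, hb, hab⟩ := Finset.one_lt_card.1 (by omega : 1 < (ℓ ∩ Y).card)
  have hpa : p ≠ a := fun h => hpl (h ▸ ha)
  have hpb : p ≠ b := fun h => hpl (h ▸ hb)
  have hR : G.R a b p := hcl' a (Finset.mem_insert_of_mem ha) b (Finset.mem_insert_of_mem hb)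
    p (Finset.mem_insert_self _ _) hab (fun h => hpb h.symm) (fun h => hpa h.symm)
  exact hmax p (hYX hp) (fun h => hpl (Finset.mem_inter.2 ⟨h, hp⟩))
    (clique_insert hcl (Finset.mem_inter.1 ha).1 (Finset.mem_inter.1 hb).1 hab hR)

lemma line_unique {X ℓ₁ ℓ₂ : Finset V} (h1 : G.IsLine X ℓ₁) (h2 : G.IsLine X ℓ₂) {a b : V}
    (ha1 : a ∈ ℓ₁) (ha2 : a ∈ ℓ₂) (hb1 : b ∈ ℓ₁) (hb2 : b ∈ ℓ₂) (hab : a ≠ b) : ℓ₁ = ℓ₂ := by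
  have key : ∀ m₁ m₂ : Finset V, G.IsLine X m₁ → G.IsLine X m₂ →
      a ∈ m₁ → a ∈ m₂ → b ∈ m₁ → b ∈ m₂ → m₂ ⊆ m₁ := by
    intro m₁ m₂ j1 j2 ka1 ka2 kb1 kb2 p hp
    by_contra hpm
    have hpa : p ≠ a := fun h => hpm (h ▸ ka1)
    have hpb : p ≠ b := fun h => hpm (h ▸ kb1)
    have hR : G.R a b p := j2.2.2.1 a ka2 b kb2 p hp hab (fun h => hpb h.symm) (fun h => hpa h.symm)
    exact j1.2.2.2 p (j2.1 hp) hpm (clique_insert j1.2.2.1 ka1 kb1 hab hR)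
  exact subset_antisymm (key ℓ₂ ℓ₁ h2 h1 ha2 ha1 hb2 hb1) (key ℓ₁ ℓ₂ h1 h2 ha1 ha2 hb1 hb2)

lemma line_ext_eq {X Y m : Finset V} (hYX : Y ⊆ X) (hm : G.IsLine Y m) :
    ∃ ℓ, G.IsLine X ℓ ∧ ℓ ∩ Y = m := by
  obtain ⟨ℓ, hℓ, hmℓ⟩ := exists_line_ext (hm.1.trans hYX) hm.2.2.1 hm.2.1
  refine ⟨ℓ, hℓ, subset_antisymm ?_ (Finset.subset_inter hmℓ hm.1)⟩
  intro p hp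
  rw [Finset.mem_inter] at hp
  by_contra hpm
  exact hm.2.2.2 p hp.2 hpm (hℓ.2.2.1.subset (Finset.insert_subset hp.1 hmℓ))



noncomputable def ww (s : Finset V) : ℤ := max ((s.card : ℤ) - 2) 0

lemma mem_lines {X ℓ : Finset V} : ℓ ∈ G.lines X ↔ G.IsLine X ℓ := by
  simp [lines]

lemma delta_eq {X Y : Finset V} (hYX : Y ⊆ X) :
    G.delta Y = (Y.card : ℤ) - ∑ ℓ ∈ G.lines X, ww (ℓ ∩ Y) := by
  unfold delta
  congr 1
  rw [← Finset.sum_filter_add_sum_filter_not (G.lines X) (fun ℓ => 3 ≤ (ℓ ∩ Y).card)]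
  have h2 : ∑ ℓ ∈ (G.lines X).filter (fun ℓ => ¬ 3 ≤ (ℓ ∩ Y).card), ww (ℓ ∩ Y) = 0 := by
    apply Finset.sum_eq_zero
    intro ℓ hℓ
    have := (Finset.mem_filter.1 hℓ).2
    unfold ww
    omega
  rw [h2, add_zero]
  refine (Finset.sum_bij (fun ℓ _ => ℓ ∩ Y) ?_ ?_ ?_ ?_).symm
  · intro ℓ hℓ
    rw [Finset.mem_filter, mem_lines] at hℓ
    exact mem_lines.2 (line_restrict hYX hℓ.1 hℓ.2)
  · intro ℓ₁ h₁ ℓ₂ h₂ heq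
    rw [Finset.mem_filter, mem_lines] at h₁ h₂
    obtain ⟨a, ha, b, hb, hab⟩ := Finset.one_lt_card.1 (by omega : 1 < (ℓ₁ ∩ Y).card)
    have heq' : ℓ₁ ∩ Y = ℓ₂ ∩ Y := heq
    have ha' : a ∈ ℓ₂ ∩ Y := heq' ▸ ha
    have hb' : b ∈ ℓ₂ ∩ Y := heq' ▸ hb
    exact line_unique h₁.1 h₂.1 (Finset.mem_inter.1 ha).1 (Finset.mem_inter.1 ha').1
      (Finset.mem_inter.1 hb).1 (Finset.mem_inter.1 hb').1 hab
  · intro m hm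
    rw [mem_lines] at hm
    obtain ⟨ℓ, hℓ, heq⟩ := line_ext_eq hYX hm
    exact ⟨ℓ, by rw [Finset.mem_filter, mem_lines]; exact ⟨hℓ, by rw [heq]; exact hm.2.1⟩, heq⟩
  · intro ℓ hℓ
    rw [Finset.mem_filter] at hℓ
    show ww (ℓ ∩ Y) = ((ℓ ∩ Y).card : ℤ) - 2
    unfold ww
    have := hℓ.2
    omega

lemma delta_submod {X Y Z : Finset V} (hX : X ⊆ Z) (hY : Y ⊆ Z) :
    G.delta (X ∪ Y) + G.delta (X ∩ Y) ≤ G.delta X + G.delta Y := by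
  rw [delta_eq (Finset.union_subset hX hY), delta_eq (Finset.inter_subset_left.trans hX),
    delta_eq hX, delta_eq hY]
  have hcard := Finset.card_union_add_card_inter X Y
  have hsum : ∑ ℓ ∈ G.lines Z, (ww (ℓ ∩ X) + ww (ℓ ∩ Y)) ≤
      ∑ ℓ ∈ G.lines Z, (ww (ℓ ∩ (X ∪ Y)) + ww (ℓ ∩ (X ∩ Y))) := by
    apply Finset.sum_le_sum
    intro ℓ _
    have e1 : ℓ ∩ (X ∪ Y) = (ℓ ∩ X) ∪ (ℓ ∩ Y) := Finset.inter_union_distrib_left ℓ X Y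
    have e2 : ℓ ∩ (X ∩ Y) = (ℓ ∩ X) ∩ (ℓ ∩ Y) := Finset.inter_inter_distrib_left ℓ X Y
    have hc := Finset.card_union_add_card_inter (ℓ ∩ X) (ℓ ∩ Y)
    have m1 : (ℓ ∩ X).card ≤ ((ℓ ∩ X) ∪ (ℓ ∩ Y)).card :=
      Finset.card_le_card Finset.subset_union_left
    have m2 : ((ℓ ∩ X) ∩ (ℓ ∩ Y)).card ≤ (ℓ ∩ Y).card :=
      Finset.card_le_card Finset.inter_subset_right
    have m3 : (ℓ ∩ Y).card ≤ ((ℓ ∩ X) ∪ (ℓ ∩ Y)).card :=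
      Finset.card_le_card Finset.subset_union_right
    have m4 : ((ℓ ∩ X) ∩ (ℓ ∩ Y)).card ≤ (ℓ ∩ X).card :=
      Finset.card_le_card Finset.inter_subset_left
    rw [e1, e2]
    unfold ww
    omega
  rw [Finset.sum_add_distrib, Finset.sum_add_distrib] at hsum
  have hcard' : (((X ∪ Y).card : ℤ) + ((X ∩ Y).card : ℤ)) = (X.card : ℤ) + (Y.card : ℤ) := by
    exact_mod_cast hcard
  linarith




lemma amalg_symm {A B : Finset V} (h : G.IsCanonicalAmalgam A B) :
    G.IsCanonicalAmalgam B A := by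
  intro ℓ hℓ
  rw [Finset.union_comm] at hℓ
  rcases h ℓ hℓ with h1 | h1 | ⟨h1, h2, h3⟩
  · exact Or.inr (Or.inl h1)
  · exact Or.inl h1
  · exact Or.inr (Or.inr ⟨by rwa [Finset.inter_comm B A], h3, h2⟩)

lemma key_delta {A B X : Finset V} (hD : G.IsCanonicalAmalgam A B)
    (hBX : B ⊆ X) (hXD : X ⊆ A ∪ B) :
    G.delta X = G.delta (X ∩ A) + G.delta B - G.delta (A ∩ B) := by
  have hCX : A ∩ B ⊆ X := Finset.inter_subset_right.trans hBX
  -- set identities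
  have e0 : (X ∩ A) ∪ B = X := by
    ext x
    have h1 : x ∈ B → x ∈ X := fun h => hBX h
    have h2 : x ∈ X → x ∈ A ∪ B := fun h => hXD h
    simp only [Finset.mem_union, Finset.mem_inter] at *
    tauto
  have e0' : (X ∩ A) ∩ B = A ∩ B := by
    ext x
    have h1 : x ∈ A ∩ B → x ∈ X := fun h => hCX h
    simp only [Finset.mem_inter] at *
    tauto
  have hcard : ((X ∩ A).card : ℤ) + (B.card : ℤ) = (X.card : ℤ) + ((A ∩ B).card : ℤ) := by
    have := Finset.card_union_add_card_inter (X ∩ A) B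
    rw [e0, e0'] at this
    exact_mod_cast this.symm
  rw [delta_eq hXD, delta_eq ((Finset.inter_subset_left (s₂ := A)).trans hXD),
    delta_eq (Finset.subset_union_right (s₁ := A)), delta_eq
    ((Finset.inter_subset_right (s₁ := A)).trans (Finset.subset_union_right (s₁ := A)))]
  have hsum : ∑ ℓ ∈ G.lines (A ∪ B), (ww (ℓ ∩ X) + ww (ℓ ∩ (A ∩ B))) =
      ∑ ℓ ∈ G.lines (A ∪ B), (ww (ℓ ∩ (X ∩ A)) + ww (ℓ ∩ B)) := by
    apply Finset.sum_congr rfl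
    intro ℓ hℓ
    rcases hD ℓ hℓ with hc | hc | ⟨hc1, hc2, hc3⟩
    · -- ℓ ⊆ A
      have f1 : ℓ ∩ B = ℓ ∩ (A ∩ B) := by
        ext x
        have : x ∈ ℓ → x ∈ A := fun h => hc h
        simp only [Finset.mem_inter] at *
        tauto
      have f2 : ℓ ∩ (X ∩ A) = ℓ ∩ X := by
        ext x
        have : x ∈ ℓ → x ∈ A := fun h => hc h
        simp only [Finset.mem_inter] at *
        tauto
      rw [f1, f2]
    · -- ℓ ⊆ B
      have f1 : ℓ ∩ X = ℓ := Finset.inter_eq_left.2 (hc.trans hBX)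
      have f2 : ℓ ∩ B = ℓ := Finset.inter_eq_left.2 hc
      have f3 : ℓ ∩ (X ∩ A) = ℓ ∩ (A ∩ B) := by
        ext x
        have h1 : x ∈ ℓ → x ∈ B := fun h => hc h
        have h2 : x ∈ ℓ → x ∈ X := fun h => hBX (hc h)
        simp only [Finset.mem_inter] at *
        tauto
      rw [f1, f2, f3]
      ring
    · -- split line
      have hb3 : 3 ≤ (ℓ ∩ B).card := hc3.2.1
      have hsub : ℓ ∩ (A ∩ B) ⊆ ℓ ∩ (X ∩ A) := by
        intro x hx
        simp only [Finset.mem_inter] at *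
        exact ⟨hx.1, hBX hx.2.2, hx.2.1⟩
      have hca : (ℓ ∩ (A ∩ B)).card ≤ (ℓ ∩ (X ∩ A)).card := Finset.card_le_card hsub
      have eu : (ℓ ∩ (X ∩ A)) ∪ (ℓ ∩ B) = ℓ ∩ X := by
        ext x
        have h1 : x ∈ B → x ∈ X := fun h => hBX h
        have h2 : x ∈ X → x ∈ A ∪ B := fun h => hXD h
        simp only [Finset.mem_union, Finset.mem_inter] at *
        tauto
      have ei : (ℓ ∩ (X ∩ A)) ∩ (ℓ ∩ B) = ℓ ∩ (A ∩ B) := by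
        ext x
        have h1 : x ∈ A ∩ B → x ∈ X := fun h => hCX h
        simp only [Finset.mem_inter] at *
        tauto
      have hcc := Finset.card_union_add_card_inter (ℓ ∩ (X ∩ A)) (ℓ ∩ B)
      rw [eu, ei] at hcc
      unfold ww
      omega
  rw [Finset.sum_add_distrib, Finset.sum_add_distrib] at hsum
  linarith


end PlaneGeom

/-- amalgamation property of `(K₀, ≤)`: for `C = A ∩ B` with
`C ≤ A`, `C ≤ B` in `K₀`, the canonical amalgam `D = A ⊕_C B` lies in `K₀` and
satisfies `A ≤ D` and `B ≤ D`. -/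
theorem stmt_9 {V : Type} [Fintype V] [DecidableEq V] (G : PlaneGeom V)
    (A B : Finset V) (hA : G.InK0 A) (hB : G.InK0 B)
    (hCA : G.Strong (A ∩ B) A) (hCB : G.Strong (A ∩ B) B)
    (hD : G.IsCanonicalAmalgam A B) :
    G.InK0 (A ∪ B) ∧ G.Strong A (A ∪ B) ∧ G.Strong B (A ∪ B) := by

  have keyB : ∀ X : Finset V, B ⊆ X → X ⊆ A ∪ B →
      G.delta X = G.delta (X ∩ A) + G.delta B - G.delta (A ∩ B) :=
    fun X h1 h2 => PlaneGeom.key_delta hD h1 h2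
  have keyA : ∀ X : Finset V, A ⊆ X → X ⊆ A ∪ B →
      G.delta X = G.delta (X ∩ B) + G.delta A - G.delta (A ∩ B) := by
    intro X h1 h2
    have := PlaneGeom.key_delta (PlaneGeom.amalg_symm hD) h1 (by rwa [Finset.union_comm])
    rwa [Finset.inter_comm B A] at this
  have strongA : G.Strong A (A ∪ B) := by
    refine ⟨Finset.subset_union_left, fun X h1 h2 => ?_⟩
    have h3 := keyA X h1 h2
    have h4 : G.delta (A ∩ B) ≤ G.delta (X ∩ B) := by
      apply hCB.2
      · exact Finset.subset_inter (Finset.inter_subset_left.trans h1) Finset.inter_subset_right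
      · exact Finset.inter_subset_right
    linarith
  have strongB : G.Strong B (A ∪ B) := by
    refine ⟨Finset.subset_union_right, fun X h1 h2 => ?_⟩
    have h3 := keyB X h1 h2
    have h4 : G.delta (A ∩ B) ≤ G.delta (X ∩ A) := by
      apply hCA.2
      · exact Finset.subset_inter (Finset.inter_subset_right.trans h1) Finset.inter_subset_left
      · exact Finset.inter_subset_right
    linarith
  refine ⟨?_, strongA, strongB⟩
  intro X hX
  have hsub := PlaneGeom.delta_submod (G := G) hX (Finset.subset_union_right (s₁ := A) (s₂ := B))
  have h2 := keyB (X ∪ B) Finset.subset_union_right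
    (Finset.union_subset hX Finset.subset_union_right)
  have h3 : G.delta (A ∩ B) ≤ G.delta ((X ∪ B) ∩ A) := by
    apply hCA.2
    · exact Finset.subset_inter
        (Finset.inter_subset_right.trans (Finset.subset_union_right (s₁ := X)))
        Finset.inter_subset_left
    · exact Finset.inter_subset_right
  have h4 : 0 ≤ G.delta (X ∩ B) := hB _ Finset.inter_subset_right
  linarith
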